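/- arXiv:math/0408224 — 7 statements merged into one kernel-verified Lean document; each statement's English description precedes it below -/
import Mathlib

section
/- Let 𝒲 be a self-adjoint linear endomorphism of Skew(n) and let e = dim E(𝒲). Then the kernel of 𝒲 satisfies dim Ker(𝒲) ≥ e·n − e(e+1)/2. -/
open scoped RealInnerProductSpace
open Matrix

noncomputable section

/-- The space `Skew(n)` of real skew-symmetric `n × n` matrices. -/
def SkewMat (n : ℕ) : Submodule ℝ (Matrix (Fin n) (Fin n) ℝ) where
  carrier := {A | Aᵀ = -A}
  add_mem' := by
    intro a b ha hb
    simp only [Set.mem_setOf_eq] at *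
    simp [Matrix.transpose_add, ha, hb, neg_add]; abel
  zero_mem' := by simp
  smul_mem' := by
    intro c a ha
    simp only [Set.mem_setOf_eq] at *
    simp [Matrix.transpose_smul, ha]

/-- The wedge `v ∧ θ := v θᵀ − θ vᵀ` as a matrix. -/
def wedge {n : ℕ} (v θ : EuclideanSpace ℝ (Fin n)) : Matrix (Fin n) (Fin n) ℝ :=
  Matrix.of fun i j => v i * θ j - θ i * v j

lemma wedge_mem {n : ℕ} (v θ : EuclideanSpace ℝ (Fin n)) : wedge v θ ∈ SkewMat n := by
  show (wedge v θ)ᵀ = -(wedge v θ)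
  ext i j
  simp [wedge]
  ring

/-- The wedge `v ∧ θ` as an element of `Skew(n)`. -/
def wedgeS {n : ℕ} (v θ : EuclideanSpace ℝ (Fin n)) : SkewMat n :=
  ⟨wedge v θ, wedge_mem v θ⟩

/-- The Frobenius inner product `⟨A, B⟩ = tr(Aᵀ B)` on `Skew(n)`. -/
def frobInner {n : ℕ} (A B : SkewMat n) : ℝ :=
  Matrix.trace ((A : Matrix (Fin n) (Fin n) ℝ)ᵀ * (B : Matrix (Fin n) (Fin n) ℝ))

/-- The subspace `E(𝒲) = {v : 𝒲(v ∧ θ) = 0 for all θ}`. -/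
def Esp {n : ℕ} (𝒲 : SkewMat n →ₗ[ℝ] SkewMat n) :
    Submodule ℝ (EuclideanSpace ℝ (Fin n)) where
  carrier := {v | ∀ θ : EuclideanSpace ℝ (Fin n), 𝒲 (wedgeS v θ) = 0}
  add_mem' := by
    intro a b ha hb θ
    have h : wedgeS (a + b) θ = wedgeS a θ + wedgeS b θ := by
      apply Subtype.ext
      ext i j
      simp [wedgeS, wedge, PiLp.add_apply]
      ring
    rw [h, map_add, ha θ, hb θ, add_zero]
  zero_mem' := by
    intro θ
    have h : wedgeS (0 : EuclideanSpace ℝ (Fin n)) θ = 0 := by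
      apply Subtype.ext
      ext i j
      simp [wedgeS, wedge]
    rw [h, map_zero]
  smul_mem' := by
    intro c a ha θ
    have h : wedgeS (c • a) θ = c • wedgeS a θ := by
      apply Subtype.ext
      ext i j
      simp [wedgeS, wedge, PiLp.smul_apply, Matrix.smul_apply, smul_eq_mul]
      ring
    rw [h, _root_.map_smul, ha θ, smul_zero]


/-- A bilinear-style functional `A ↦ ∑ u k * A k l * w l` on matrices. -/
def pairFunc {n : ℕ} (u w : Fin n → ℝ) : Matrix (Fin n) (Fin n) ℝ →ₗ[ℝ] ℝ where
  toFun A := ∑ k, ∑ l, u k * A k l * w l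
  map_add' := by
    intro A B
    rw [← Finset.sum_add_distrib]
    refine Finset.sum_congr rfl fun k _ => ?_
    rw [← Finset.sum_add_distrib]
    refine Finset.sum_congr rfl fun l _ => by simp [Matrix.add_apply]; ring
  map_smul' := by
    intro c A
    simp only [Matrix.smul_apply, smul_eq_mul, RingHom.id_apply, Finset.mul_sum]
    exact Finset.sum_congr rfl fun k _ => Finset.sum_congr rfl fun l _ => by ring

lemma pairFunc_wedge {n : ℕ} (u w : Fin n → ℝ) (v θ : EuclideanSpace ℝ (Fin n)) :
    pairFunc u w (wedge v θ) =
      (∑ k, u k * v k) * (∑ l, w l * θ l) - (∑ k, u k * θ k) * (∑ l, w l * v l) := by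
  simp only [pairFunc, LinearMap.coe_mk, AddHom.coe_mk, wedge, Matrix.of_apply,
    Finset.sum_mul_sum]
  rw [← Finset.sum_sub_distrib]
  refine Finset.sum_congr rfl fun k _ => ?_
  rw [← Finset.sum_sub_distrib]
  exact Finset.sum_congr rfl fun l _ => by ring

lemma dot_coord {n : ℕ} (b : Module.Basis (Fin n) ℝ (EuclideanSpace ℝ (Fin n)))
    (i : Fin n) (v : EuclideanSpace ℝ (Fin n)) :
    (∑ k, b.coord i (EuclideanSpace.single k (1:ℝ)) * v k) = b.coord i v := by
  have hv : v = ∑ k, v k • EuclideanSpace.single k (1:ℝ) := by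
    have := (EuclideanSpace.basisFun (Fin n) ℝ).sum_repr v
    simpa using this.symm
  conv_rhs => rw [hv]
  rw [map_sum]
  exact Finset.sum_congr rfl fun k _ => by rw [_root_.map_smul]; simp [mul_comm]

lemma wedge_indep {n : ℕ} (b : Module.Basis (Fin n) ℝ (EuclideanSpace ℝ (Fin n))) :
    LinearIndependent ℝ
      (fun p : {p : Fin n × Fin n // p.1 < p.2} => wedge (b p.1.1) (b p.1.2)) := by
  rw [Fintype.linearIndependent_iff]
  intro g hg p
  set u : Fin n → Fin n → ℝ := fun i k => b.coord i (EuclideanSpace.single k (1:ℝ)) with hu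
  have key := congrArg (pairFunc (u p.1.1) (u p.1.2)) hg
  rw [map_sum, map_zero] at key
  have hδ : ∀ i m : Fin n, (∑ k, u i k * (b m) k) = if m = i then 1 else 0 := by
    intro i m
    rw [hu, dot_coord b i (b m), Module.Basis.coord_apply, Module.Basis.repr_self, Finsupp.single_apply]
  have hterm : ∀ q : {p : Fin n × Fin n // p.1 < p.2},
      pairFunc (u p.1.1) (u p.1.2) (g q • wedge (b q.1.1) (b q.1.2)) =
        g q * ((if q.1.1 = p.1.1 then (1:ℝ) else 0) * (if q.1.2 = p.1.2 then 1 else 0)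
          - (if q.1.2 = p.1.1 then 1 else 0) * (if q.1.1 = p.1.2 then 1 else 0)) := by
    intro q
    rw [_root_.map_smul, pairFunc_wedge, smul_eq_mul,
      hδ p.1.1 q.1.1, hδ p.1.2 q.1.2, hδ p.1.1 q.1.2, hδ p.1.2 q.1.1]
  rw [Finset.sum_congr rfl (fun q _ => hterm q)] at key
  rw [Finset.sum_eq_single p] at key
  · have hne : p.1.2 ≠ p.1.1 := (ne_of_lt p.2).symm
    have hne' : p.1.1 ≠ p.1.2 := ne_of_lt p.2
    simpa [hne, hne'] using key
  · intro q _ hq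
    have hne : q.1 ≠ p.1 := fun h => hq (Subtype.ext h)
    have h1 : ¬(q.1.1 = p.1.1 ∧ q.1.2 = p.1.2) := by
      intro ⟨a, c⟩; exact hne (Prod.ext a c)
    have h2 : ¬(q.1.2 = p.1.1 ∧ q.1.1 = p.1.2) := by
      rintro ⟨a, c⟩
      have hq2 := q.2
      have hp2 := p.2
      rw [Fin.lt_def] at hq2 hp2
      have e1 : (q.1.1 : ℕ) = (p.1.2 : ℕ) := by rw [c]
      have e2 : (q.1.2 : ℕ) = (p.1.1 : ℕ) := by rw [a]
      omega
    have hz : ((if q.1.1 = p.1.1 then (1:ℝ) else 0) * (if q.1.2 = p.1.2 then 1 else 0)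
          - (if q.1.2 = p.1.1 then 1 else 0) * (if q.1.1 = p.1.2 then 1 else 0)) = 0 := by
      rcases not_and_or.mp h1 with h | h <;> rcases not_and_or.mp h2 with h' | h' <;>
        simp [h, h']
    rw [hz, mul_zero]
  · intro h
    exact absurd (Finset.mem_univ p) h

lemma cardI (n e : ℕ) (hen : e ≤ n) :
    Fintype.card {p : Fin n × Fin n // p.1 < p.2 ∧ (p.1 : ℕ) < e} =
      e * n - e * (e + 1) / 2 := by
  rw [Fintype.card_congr
    (Equiv.subtypeProdEquivSigmaSubtype (fun i j : Fin n => i < j ∧ (i : ℕ) < e))]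
  rw [Fintype.card_sigma]
  have hcard : ∀ i : Fin n,
      Fintype.card {j : Fin n // i < j ∧ (i : ℕ) < e} =
        if (i : ℕ) < e then n - 1 - (i : ℕ) else 0 := by
    intro i
    by_cases h : (i : ℕ) < e
    · rw [if_pos h, Fintype.card_subtype]
      have : (Finset.univ.filter fun j : Fin n => i < j ∧ (i : ℕ) < e) = Finset.Ioi i := by
        ext j; simp [h]
      rw [this, Fin.card_Ioi]
    · rw [if_neg h, Fintype.card_subtype]
      have : (Finset.univ.filter fun j : Fin n => i < j ∧ (i : ℕ) < e) = ∅ := by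
        ext j; simp [h]
      rw [this, Finset.card_empty]
  rw [Finset.sum_congr rfl fun i _ => hcard i]
  rw [Fin.sum_univ_eq_sum_range (fun i => if i < e then n - 1 - i else 0) n]
  rw [← Finset.sum_filter]
  have hf : (Finset.range n).filter (· < e) = Finset.range e := by
    ext j; simp; omega
  rw [hf]
  have hsub : ∑ i ∈ Finset.range e, (n - 1 - i) =
      (∑ i ∈ Finset.range e, (n - 1)) - ∑ i ∈ Finset.range e, i := by
    rw [Finset.sum_tsub_distrib]
    intro i hi
    simp at hi
    omega
  rw [hsub, Finset.sum_const, Finset.card_range, smul_eq_mul]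
  have hg : (∑ i ∈ Finset.range e, i) * 2 = e * (e - 1) := Finset.sum_range_id_mul_two e
  set A := ∑ i ∈ Finset.range e, i with hA
  have h1 : e * (e + 1) = e * (e - 1) + 2 * e := by
    cases e with
    | zero => simp
    | succ k => simp [Nat.succ_sub_one]; ring
  have h2 : e * (n - 1) = e * n - e * 1 := Nat.mul_sub e n 1
  have h3 : e * e ≤ e * n := Nat.mul_le_mul_left e hen
  have h4 : e * e = e * (e - 1) + e := by
    cases e with
    | zero => simp
    | succ k => simp [Nat.succ_sub_one]; ring
  rw [h2, h1]
  omega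

lemma exists_adapted_basis {n e : ℕ} (E : Submodule ℝ (EuclideanSpace ℝ (Fin n)))
    (he : Module.finrank ℝ E = e) :
    ∃ b : Module.Basis (Fin n) ℝ (EuclideanSpace ℝ (Fin n)),
      ∀ i : Fin n, (i : ℕ) < e → b i ∈ E := by
  have hEn : e ≤ n := by
    have h1 := Submodule.finrank_le E
    rw [he, finrank_euclideanSpace_fin] at h1
    exact h1
  obtain ⟨C, hC⟩ := Submodule.exists_isCompl E
  have hdim : Module.finrank ℝ E + Module.finrank ℝ C = n := by
    rw [Submodule.finrank_add_eq_of_isCompl hC, finrank_euclideanSpace_fin]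
  have hdC : Module.finrank ℝ C = n - e := by omega
  let bE : Module.Basis (Fin e) ℝ E := (Module.finBasis ℝ E).reindex (finCongr he)
  let bC : Module.Basis (Fin (n - e)) ℝ C := (Module.finBasis ℝ C).reindex (finCongr hdC)
  let b0 : Module.Basis (Fin e ⊕ Fin (n - e)) ℝ (EuclideanSpace ℝ (Fin n)) :=
    (bE.prod bC).map (Submodule.prodEquivOfIsCompl E C hC)
  have hne : e + (n - e) = n := by omega
  refine ⟨b0.reindex (finSumFinEquiv.trans (finCongr hne)), fun i hi => ?_⟩
  rw [Module.Basis.reindex_apply]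
  have hsymm : (finSumFinEquiv.trans (finCongr hne)).symm i = Sum.inl ⟨i, hi⟩ := by
    rw [Equiv.symm_apply_eq]
    simp only [Equiv.trans_apply, finSumFinEquiv_apply_left, finCongr_apply]
    exact Fin.ext rfl
  rw [hsymm]
  have hb0 : b0 (Sum.inl ⟨i, hi⟩) =
      (bE ⟨i, hi⟩ : EuclideanSpace ℝ (Fin n)) + ((0 : C) : EuclideanSpace ℝ (Fin n)) := by
    simp only [b0, Module.Basis.map_apply, Module.Basis.prod_apply, Sum.elim_inl, Function.comp_apply,
      LinearMap.inl_apply]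
    rw [Submodule.coe_prodEquivOfIsCompl']
  rw [hb0]
  simp

theorem finrank_ker_ge {n : ℕ} (𝒲 : SkewMat n →ₗ[ℝ] SkewMat n)
    (hW : ∀ A B : SkewMat n, frobInner (𝒲 A) B = frobInner A (𝒲 B))
    (e : ℕ) (he : Module.finrank ℝ (Esp 𝒲) = e) :
    e * n - e * (e + 1) / 2 ≤ Module.finrank ℝ (LinearMap.ker 𝒲) := by
  classical
  have hEn : e ≤ n := by
    have h1 := Submodule.finrank_le (Esp 𝒲)
    rw [he, finrank_euclideanSpace_fin] at h1
    exact h1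
  obtain ⟨b, hb⟩ := exists_adapted_basis (Esp 𝒲) he
  set I := {p : Fin n × Fin n // p.1 < p.2 ∧ (p.1 : ℕ) < e} with hI
  set wS : I → SkewMat n := fun p => wedgeS (b p.1.1) (b p.1.2) with hwS
  -- linear independence
  have hinj : Function.Injective
      (fun p : I => (⟨p.1, p.2.1⟩ : {p : Fin n × Fin n // p.1 < p.2})) := by
    intro p q h
    exact Subtype.ext (by simpa using congrArg Subtype.val h)
  have hliM0 : LinearIndependent ℝ
      ((fun q : {p : Fin n × Fin n // p.1 < p.2} => wedge (b q.1.1) (b q.1.2)) ∘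
        (fun p : I => (⟨p.1, p.2.1⟩ : {p : Fin n × Fin n // p.1 < p.2}))) :=
    (wedge_indep b).comp _ hinj
  have hliM : LinearIndependent ℝ (fun p : I => wedge (b p.1.1) (b p.1.2)) := hliM0
  have hli : LinearIndependent ℝ wS := by
    apply LinearIndependent.of_comp (SkewMat n).subtype
    exact hliM
  -- membership in the kernel
  have hker : ∀ p : I, wS p ∈ LinearMap.ker 𝒲 := by
    intro p
    rw [LinearMap.mem_ker]
    exact hb p.1.1 p.2.2 (b p.1.2)
  have hle : Submodule.span ℝ (Set.range wS) ≤ LinearMap.ker 𝒲 := by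
    rw [Submodule.span_le]
    rintro _ ⟨p, rfl⟩
    exact hker p
  calc e * n - e * (e + 1) / 2 = Fintype.card I := (cardI n e hEn).symm
    _ = Module.finrank ℝ (Submodule.span ℝ (Set.range wS)) := (finrank_span_eq_card hli).symm
    _ ≤ Module.finrank ℝ (LinearMap.ker 𝒲) := Submodule.finrank_mono hle


end
end

section
/- Let 𝒲 be a self-adjoint linear endomorphism of Skew(n). If the image of 𝒲 contains an invertible matrix η (i.e. a nondegenerate two-form), then E(𝒲) = {0}. -/
open scoped RealInnerProductSpace
open Matrix

noncomputable section

/-!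
If `η = 𝒲 A` and `v ∈ E(𝒲)`, self-adjointness gives `⟨η, v ∧ θ⟩ = ⟨A, 𝒲 (v ∧ θ)⟩ = 0` for
every `θ`. For skew `η` one has `⟨η, v ∧ θ⟩ = -2 ⟨η v, θ⟩`, so taking `θ = η v` gives `η v = 0`,
and invertibility of `η` forces `v = 0`.
-/

theorem wedge_eq_vecMulVec_sub {n : ℕ} (v θ : EuclideanSpace ℝ (Fin n)) :
    wedge v θ = vecMulVec v θ - vecMulVec θ v := by
  ext i j
  simp [wedge, vecMulVec_apply]

theorem trace_transpose_mul_wedge {n : ℕ} (M : Matrix (Fin n) (Fin n) ℝ)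
    (v θ : EuclideanSpace ℝ (Fin n)) :
    trace (Mᵀ * wedge v θ) = (Mᵀ *ᵥ v) ⬝ᵥ θ - (M *ᵥ v) ⬝ᵥ θ := by
  rw [wedge_eq_vecMulVec_sub, Matrix.mul_sub, trace_sub, mul_vecMulVec, mul_vecMulVec,
    trace_vecMulVec, trace_vecMulVec, dotProduct_comm (Mᵀ *ᵥ θ.ofLp), dotProduct_mulVec v.ofLp,
    vecMul_transpose M v]

theorem frobInner_wedgeS {n : ℕ} (η : SkewMat n)
    (v θ : EuclideanSpace ℝ (Fin n)) :
    frobInner η (wedgeS v θ) = -2 * ((η : Matrix (Fin n) (Fin n) ℝ) *ᵥ v) ⬝ᵥ θ := by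
  have hskew : (η : Matrix (Fin n) (Fin n) ℝ)ᵀ = -η := η.2
  rw [frobInner, wedgeS, trace_transpose_mul_wedge, hskew, neg_mulVec, neg_dotProduct]
  ring

theorem mulVec_eq_zero_of_frobInner_wedgeS_eq_zero {n : ℕ} (η : SkewMat n)
    {v : EuclideanSpace ℝ (Fin n)} (h : ∀ θ, frobInner η (wedgeS v θ) = 0) :
    (η : Matrix (Fin n) (Fin n) ℝ) *ᵥ v = 0 := by
  have hηv := h (WithLp.toLp 2 ((η : Matrix (Fin n) (Fin n) ℝ) *ᵥ v))
  rw [frobInner_wedgeS] at hηv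
  exact dotProduct_self_eq_zero.1 (by simpa using hηv)

theorem frobInner_zero_right {n : ℕ} (A : SkewMat n) : frobInner A 0 = 0 := by
  simp [frobInner]

theorem frobInner_wedgeS_eq_zero_of_mem_Esp {n : ℕ} {𝒲 : SkewMat n →ₗ[ℝ] SkewMat n}
    (hW : ∀ A B : SkewMat n, frobInner (𝒲 A) B = frobInner A (𝒲 B))
    {v : EuclideanSpace ℝ (Fin n)} (hv : v ∈ Esp 𝒲) (A : SkewMat n)
    (θ : EuclideanSpace ℝ (Fin n)) :
    frobInner (𝒲 A) (wedgeS v θ) = 0 := by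
  rw [hW, hv θ, frobInner_zero_right]

theorem Esp_eq_bot_of_invertible_mem_range {n : ℕ} (𝒲 : SkewMat n →ₗ[ℝ] SkewMat n)
    (hW : ∀ A B : SkewMat n, frobInner (𝒲 A) B = frobInner A (𝒲 B))
    (η : SkewMat n) (hη : η ∈ LinearMap.range 𝒲)
    (hinv : IsUnit (η : Matrix (Fin n) (Fin n) ℝ)) :
    Esp 𝒲 = ⊥ := by
  refine eq_bot_iff.2 fun v hv => ?_
  obtain ⟨A, rfl⟩ := hη
  have hηv := mulVec_eq_zero_of_frobInner_wedgeS_eq_zero _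
    (frobInner_wedgeS_eq_zero_of_mem_Esp hW hv A)
  have hdet : (𝒲 A : Matrix (Fin n) (Fin n) ℝ).det ≠ 0 :=
    ((isUnit_iff_isUnit_det _).1 hinv).ne_zero
  exact (Submodule.mem_bot ℝ).2 (WithLp.ofLp_injective 2 (eq_zero_of_mulVec_eq_zero hdet hηv))

end
end

section
/- Let X be a topological space and A : X → Matrix (Fin n) (Fin n) ℝ a continuous map such that A(x) is symmetric for every x ∈ X. Then the function assigning to x the number of distinct real eigenvalues of A(x) (i.e. the cardinality of the spectrum of A(x)) is lower semicontinuous on X. -/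
open Matrix Filter

/-- Key estimate: if every point of the real spectrum of a hermitian real matrix `B` is at
distance at least `r` from `lam`, then `‖B w - lam • w‖ ≥ r * ‖w‖`. -/
lemma key_estimate {n : ℕ} {B : Matrix (Fin n) (Fin n) ℝ} (hB : B.IsHermitian)
    {lam r : ℝ} (hr : 0 ≤ r) (h : ∀ μ ∈ spectrum ℝ B, r ≤ |μ - lam|)
    (w : EuclideanSpace ℝ (Fin n)) :
    r * ‖w‖ ≤ ‖Matrix.toEuclideanLin B w - lam • w‖ := by
  set b := hB.eigenvectorBasis with hb
  set T := Matrix.toEuclideanLin B with hT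
  have hsym : (Matrix.toEuclideanLin B).IsSymmetric :=
    (Matrix.isHermitian_iff_isSymmetric).1 hB
  have hbT : ∀ i, T (b i) = hB.eigenvalues i • b i := by
    intro i
    apply (WithLp.equiv 2 (Fin n → ℝ)).symm.injective.eq_iff.mpr
    simpa [hT, Matrix.toEuclideanLin_apply] using hB.mulVec_eigenvectorBasis i
  have hrep : ∀ i, b.repr (T w - lam • w) i = (hB.eigenvalues i - lam) * b.repr w i := by
    intro i
    have h1 : b.repr (T w) i = hB.eigenvalues i * b.repr w i := by
      rw [b.repr_apply_apply, b.repr_apply_apply, ← hsym (b i) w, hbT i,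
        real_inner_smul_left]
    have h2 : b.repr (lam • w) = lam • b.repr w := b.repr.map_smul lam w
    simp only [map_sub, h2, PiLp.sub_apply, PiLp.smul_apply, smul_eq_mul, h1]
    ring
  have enorm : ∀ u : EuclideanSpace ℝ (Fin n),
      ‖u‖ = Real.sqrt (∑ i, (b.repr u i) ^ 2) := by
    intro u
    rw [← b.repr.norm_map u, EuclideanSpace.norm_eq]
    congr 1
    refine Finset.sum_congr rfl fun i _ => ?_
    rw [Real.norm_eq_abs, sq_abs]
  rw [enorm, enorm, ← Real.sqrt_sq hr, ← Real.sqrt_mul (by positivity)]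
  apply Real.sqrt_le_sqrt
  rw [Finset.mul_sum]
  refine Finset.sum_le_sum fun i _ => ?_
  rw [hrep i]
  have hi := h (hB.eigenvalues i) (hB.eigenvalues_mem_spectrum_real i)
  have h2 : r ^ 2 ≤ (hB.eigenvalues i - lam) ^ 2 := by
    have := abs_nonneg (hB.eigenvalues i - lam)
    nlinarith [sq_abs (hB.eigenvalues i - lam)]
  nlinarith [sq_nonneg (b.repr w i)]

theorem card_spectrum_lowerSemicontinuous {X : Type*} [TopologicalSpace X] {n : ℕ}
    (A : X → Matrix (Fin n) (Fin n) ℝ) (hA : Continuous A)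
    (hsymm : ∀ x, (A x).IsSymm) :
    LowerSemicontinuous fun x => (spectrum ℝ (A x)).ncard := by
  classical
  have hherm : ∀ x, (A x).IsHermitian := fun x => by
    rw [Matrix.IsHermitian, Matrix.conjTranspose_eq_transpose_of_trivial]
    exact hsymm x
  intro x m hm
  -- choose a subset of the spectrum of `A x` of cardinality `m + 1`
  obtain ⟨t, hts, htcard⟩ := Set.exists_subset_card_eq (Nat.succ_le_of_lt hm)
  have hfin : (spectrum ℝ (A x)).Finite := Matrix.finite_real_spectrum
  have htfin : t.Finite := hfin.subset hts
  set s : Finset ℝ := htfin.toFinset with hs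
  have hscard : s.card = m + 1 := by
    rw [hs, ← Set.ncard_eq_toFinset_card t htfin, htcard]
  have hssub : ∀ a ∈ s, a ∈ spectrum ℝ (A x) := fun a ha =>
    hts (by rwa [hs, Set.Finite.mem_toFinset] at ha)
  -- a positive separation constant
  set F : Finset ℝ :=
    insert (1 : ℝ) ((s ×ˢ s).filter (fun p => p.1 ≠ p.2) |>.image fun p => |p.1 - p.2| / 2)
    with hF
  have hFne : F.Nonempty := ⟨1, Finset.mem_insert_self _ _⟩
  set ε : ℝ := F.min' hFne with hε
  have hεpos : 0 < ε := by
    rw [hε, Finset.lt_min'_iff]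
    intro b hb
    rw [hF, Finset.mem_insert] at hb
    rcases hb with rfl | hb
    · exact one_pos
    · obtain ⟨p, hp, rfl⟩ := Finset.mem_image.1 hb
      have hne : p.1 ≠ p.2 := (Finset.mem_filter.1 hp).2
      have : p.1 - p.2 ≠ 0 := sub_ne_zero.2 hne
      positivity
  have hsep : ∀ a ∈ s, ∀ c ∈ s, a ≠ c → 2 * ε ≤ |a - c| := by
    intro a ha c hc hne
    have hmem : |a - c| / 2 ∈ F := by
      rw [hF]
      refine Finset.mem_insert_of_mem (Finset.mem_image.2 ⟨(a, c), ?_, rfl⟩)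
      exact Finset.mem_filter.2 ⟨Finset.mem_product.2 ⟨ha, hc⟩, hne⟩
    have := Finset.min'_le F _ hmem
    linarith
  -- eigenvectors for the chosen eigenvalues
  have hvex : ∀ a ∈ s, ∃ v : EuclideanSpace ℝ (Fin n),
      ‖v‖ = 1 ∧ Matrix.toEuclideanLin (A x) v = a • v := by
    intro a ha
    have : a ∈ Set.range (hherm x).eigenvalues := by
      rw [← Matrix.IsHermitian.spectrum_real_eq_range_eigenvalues (hherm x)]
      exact hssub a ha
    obtain ⟨i, hi⟩ := this
    refine ⟨(hherm x).eigenvectorBasis i, (hherm x).eigenvectorBasis.orthonormal.1 i, ?_⟩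
    apply (WithLp.equiv 2 (Fin n → ℝ)).symm.injective.eq_iff.mpr
    simpa [Matrix.toEuclideanLin_apply, hi] using (hherm x).mulVec_eigenvectorBasis i
  choose v hv1 hv2 using hvex
  -- the relevant neighborhood of x
  have hev : ∀ᶠ y in nhds x, ∀ a ∈ s.attach,
      ‖Matrix.toEuclideanLin (A y) (v a.1 a.2) - a.1 • v a.1 a.2‖ < ε := by
    rw [eventually_all_finset]
    rintro ⟨a, ha⟩ -
    show ∀ᶠ y in nhds x, ‖Matrix.toEuclideanLin (A y) (v a ha) - a • v a ha‖ < ε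
    have hcont : Continuous fun y =>
        ‖Matrix.toEuclideanLin (A y) (v a ha) - a • v a ha‖ := by
      apply Continuous.norm
      apply Continuous.sub _ continuous_const
      have h1 : Continuous fun y => (A y) *ᵥ (WithLp.equiv 2 (Fin n → ℝ) (v a ha)) :=
        hA.matrix_mulVec continuous_const
      have h2 : Continuous ((WithLp.equiv 2 (Fin n → ℝ)).symm) :=
        PiLp.continuous_toLp (p := 2) (β := fun _ : Fin n => ℝ)
      exact h2.comp h1
    have htend : Filter.Tendsto (fun y => ‖Matrix.toEuclideanLin (A y) (v a ha) - a • v a ha‖)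
        (nhds x) (nhds 0) := by
      have h' := hcont.continuousAt (x := x)
      simpa [ContinuousAt, hv2 a ha] using h'
    exact htend.eventually_lt_const hεpos
  filter_upwards [hev] with y hy'
  have hy : ∀ a (ha : a ∈ s), ‖Matrix.toEuclideanLin (A y) (v a ha) - a • v a ha‖ < ε :=
    fun a ha => hy' ⟨a, ha⟩ (Finset.mem_attach _ _)
  -- for each a ∈ s there is an eigenvalue of A y within ε
  have hexists : ∀ a, a ∈ s → ∃ μ ∈ spectrum ℝ (A y), |μ - a| < ε := by
    intro a ha
    by_contra hcon
    push_neg at hcon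
    have hkey := key_estimate (hherm y) (le_of_lt hεpos)
      (fun μ hμ => hcon μ hμ) (v a ha)
    rw [hv1 a ha, mul_one] at hkey
    exact absurd (hy a ha) (not_lt.2 hkey)
  choose μ hμmem hμlt using hexists
  -- the image finset is injective and contained in the spectrum of A y
  set G : Finset ℝ := s.attach.image (fun a => μ a.1 a.2) with hG
  have hGcard : G.card = m + 1 := by
    rw [hG, Finset.card_image_of_injOn, Finset.card_attach, hscard]
    intro a _ c _ hac
    by_contra hne
    replace hac : μ a.1 a.2 = μ c.1 c.2 := hac
    have hne' : a.1 ≠ c.1 := fun h => hne (Subtype.ext h)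
    have h1 := hμlt a.1 a.2
    have h2 := hμlt c.1 c.2
    have h3 := hsep a.1 a.2 c.1 c.2 hne'
    rw [hac] at h1
    have : |a.1 - c.1| ≤ |μ c.1 c.2 - a.1| + |μ c.1 c.2 - c.1| := by
      have := abs_sub_abs_le_abs_sub (μ c.1 c.2 - a.1) (μ c.1 c.2 - c.1)
      have h4 := abs_sub (μ c.1 c.2 - a.1) (μ c.1 c.2 - c.1)
      calc |a.1 - c.1| = |(μ c.1 c.2 - c.1) - (μ c.1 c.2 - a.1)| := by ring_nf
        _ ≤ |μ c.1 c.2 - c.1| + |μ c.1 c.2 - a.1| := abs_sub _ _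
        _ = |μ c.1 c.2 - a.1| + |μ c.1 c.2 - c.1| := by ring
    linarith
  have hGsub : (G : Set ℝ) ⊆ spectrum ℝ (A y) := by
    intro b hb
    rw [hG, Finset.coe_image, Set.mem_image] at hb
    obtain ⟨a, _, rfl⟩ := hb
    exact hμmem a.1 a.2
  calc m < m + 1 := Nat.lt_succ_self m
    _ = G.card := hGcard.symm
    _ = (G : Set ℝ).ncard := (Set.ncard_coe_finset G).symm
    _ ≤ (spectrum ℝ (A y)).ncard := Set.ncard_le_ncard hGsub Matrix.finite_real_spectrum
end

section
/- Let X be a topological space and A : X → Matrix (Fin n) (Fin n) ℝ a continuous map such that A(x) is symmetric for every x ∈ X. Let M_A be the set of points x ∈ X at which the number of distinct real eigenvalues of A is locally constant. Then M_A is open and dense in X. -/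
open Matrix Filter

section aux

variable {n : ℕ}

local notation "⟪" x ", " y "⟫" => inner (𝕜 := ℝ) x y

lemma my_isHermitian_of_isSymm {B : Matrix (Fin n) (Fin n) ℝ} (h : B.IsSymm) : B.IsHermitian := by
  ext i j
  rw [Matrix.conjTranspose_apply, star_trivial]
  exact (congrFun (congrFun h j) i).symm ▸ (Matrix.IsSymm.apply h i j)

lemma my_exists_eigenvalue_close {B C : Matrix (Fin n) (Fin n) ℝ}
    (hB : B.IsHermitian) (hC : C.IsHermitian) (i : Fin n) :
    ∃ j : Fin n, |hB.eigenvalues i - hC.eigenvalues j| ≤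
      ‖(WithLp.equiv 2 (Fin n → ℝ)).symm ((C - B) *ᵥ ⇑(hB.eigenvectorBasis i))‖ := by
  classical
  set v := hB.eigenvectorBasis i with hv
  set lam := hB.eigenvalues i with hlam
  obtain ⟨j, -, hj⟩ := Finset.exists_min_image Finset.univ
    (fun j => |lam - hC.eigenvalues j|) ⟨i, Finset.mem_univ i⟩
  refine ⟨j, ?_⟩
  set δ := |lam - hC.eigenvalues j| with hδ
  set w : EuclideanSpace ℝ (Fin n) :=
    (WithLp.equiv 2 (Fin n → ℝ)).symm ((C - B) *ᵥ ⇑v) with hw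
  set b := hC.eigenvectorBasis with hb
  have hCsymm : Cᵀ = C := by
    ext i' j'
    simpa using congrFun (congrFun hC i') j'
  have hinner : ∀ k, ⟪(b k), w⟫ = (hC.eigenvalues k - lam) * ⟪(b k), v⟫ := by
    intro k
    have h1 : ⟪(b k), w⟫ = ⇑(b k) ⬝ᵥ ((C - B) *ᵥ ⇑v) := by
      rw [EuclideanSpace.inner_eq_star_dotProduct]
      simp [hw, dotProduct_comm]
    have h2 : (C - B) *ᵥ ⇑v = C *ᵥ ⇑v - lam • ⇑v := by
      rw [Matrix.sub_mulVec, hB.mulVec_eigenvectorBasis]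
    have h3 : ⇑(b k) ⬝ᵥ (C *ᵥ ⇑v) = hC.eigenvalues k * (⇑(b k) ⬝ᵥ ⇑v) := by
      rw [Matrix.dotProduct_mulVec, ← Matrix.mulVec_transpose, hCsymm,
        hC.mulVec_eigenvectorBasis, smul_dotProduct, smul_eq_mul]
    have h4 : ⟪(b k), v⟫ = ⇑(b k) ⬝ᵥ ⇑v := by
      rw [EuclideanSpace.inner_eq_star_dotProduct]
      simp [dotProduct_comm]
    rw [h1, h2, dotProduct_sub, h3, dotProduct_smul, smul_eq_mul, h4, sub_mul]
  have hsum_w : ∑ k, ⟪(b k), w⟫ ^ 2 = ‖w‖ ^ 2 := by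
    have := b.sum_inner_mul_inner w w
    rw [real_inner_self_eq_norm_sq] at this
    rw [← this]
    refine Finset.sum_congr rfl fun k _ => ?_
    rw [real_inner_comm w (b k), sq]
  have hsum_v : ∑ k, ⟪(b k), v⟫ ^ 2 = 1 := by
    have := b.sum_inner_mul_inner v v
    rw [real_inner_self_eq_norm_sq] at this
    have hnv : ‖v‖ = 1 := hB.eigenvectorBasis.orthonormal.1 i
    rw [hnv, one_pow] at this
    rw [← this]
    refine Finset.sum_congr rfl fun k _ => ?_
    rw [real_inner_comm v (b k), sq]
  have hterm : ∀ k, δ ^ 2 * ⟪(b k), v⟫ ^ 2 ≤ ⟪(b k), w⟫ ^ 2 := by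
    intro k
    rw [hinner k]
    have h5 : δ ^ 2 ≤ (hC.eigenvalues k - lam) ^ 2 := by
      have := hj k (Finset.mem_univ k)
      have habs : |lam - hC.eigenvalues k| = |hC.eigenvalues k - lam| := abs_sub_comm _ _
      calc δ ^ 2 ≤ |lam - hC.eigenvalues k| ^ 2 := by
            apply pow_le_pow_left₀ (abs_nonneg _) this
        _ = (hC.eigenvalues k - lam) ^ 2 := by rw [habs, sq_abs]
    rw [mul_pow]
    exact mul_le_mul_of_nonneg_right h5 (sq_nonneg _)
  have hsq : δ ^ 2 ≤ ‖w‖ ^ 2 := by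
    calc δ ^ 2 = δ ^ 2 * ∑ k, ⟪(b k), v⟫ ^ 2 := by rw [hsum_v, mul_one]
      _ = ∑ k, δ ^ 2 * ⟪(b k), v⟫ ^ 2 := by rw [Finset.mul_sum]
      _ ≤ ∑ k, ⟪(b k), w⟫ ^ 2 := Finset.sum_le_sum fun k _ => hterm k
      _ = ‖w‖ ^ 2 := hsum_w
  nlinarith [abs_nonneg (lam - hC.eigenvalues j), norm_nonneg w]

end aux

theorem eigenvalue_count_locallyConstant_open_dense {X : Type*} [TopologicalSpace X] {n : ℕ}
    (A : X → Matrix (Fin n) (Fin n) ℝ) (hA : Continuous A)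
    (hsymm : ∀ x, (A x).IsSymm) :
    IsOpen {x : X | ∀ᶠ y in nhds x, (spectrum ℝ (A y)).ncard = (spectrum ℝ (A x)).ncard} ∧
    Dense {x : X | ∀ᶠ y in nhds x, (spectrum ℝ (A y)).ncard = (spectrum ℝ (A x)).ncard} := by
  classical
  have hherm : ∀ x, (A x).IsHermitian := fun x => my_isHermitian_of_isSymm (hsymm x)
  set f : X → ℕ := fun y => (spectrum ℝ (A y)).ncard with hf
  -- lower semicontinuity
  have hlsc : ∀ x : X, ∀ᶠ y in nhds x, f x ≤ f y := by
    intro x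
    have hSfin : (spectrum ℝ (A x)).Finite := (A x).finite_real_spectrum
    set S := spectrum ℝ (A x) with hS
    -- choose separation
    obtain ⟨ε, hε, hsep⟩ : ∃ ε > 0, ∀ a ∈ S, ∀ b ∈ S, a ≠ b → 2 * ε ≤ |a - b| := by
      set offD := (hSfin.toFinset ×ˢ hSfin.toFinset).filter (fun p => p.1 ≠ p.2) with hoffD
      by_cases hne : offD.Nonempty
      · obtain ⟨p, hp, hmin⟩ := Finset.exists_min_image offD (fun p => |p.1 - p.2|) hne
        refine ⟨|p.1 - p.2| / 2, ?_, ?_⟩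
        · have hp' := Finset.mem_filter.1 hp
          have : p.1 ≠ p.2 := hp'.2
          have : |p.1 - p.2| > 0 := abs_pos.2 (sub_ne_zero.2 this)
          linarith
        · intro a ha b hb hab
          have hmem : (a, b) ∈ offD := by
            rw [hoffD, Finset.mem_filter, Finset.mem_product]
            exact ⟨⟨hSfin.mem_toFinset.2 ha, hSfin.mem_toFinset.2 hb⟩, hab⟩
          have := hmin (a, b) hmem
          simp only at this
          linarith
      · refine ⟨1, one_pos, ?_⟩
        intro a ha b hb hab
        exact absurd ⟨(a, b), by
          rw [hoffD, Finset.mem_filter, Finset.mem_product]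
          exact ⟨⟨hSfin.mem_toFinset.2 ha, hSfin.mem_toFinset.2 hb⟩, hab⟩⟩ hne
    -- each eigenvalue of A x attracts an eigenvalue of A y
    have hclose : ∀ᶠ y in nhds x, ∀ lam ∈ S, ∃ μ ∈ spectrum ℝ (A y), |lam - μ| < ε := by
      rw [eventually_all_finite hSfin]
      intro lam hlam
      obtain ⟨i, hi⟩ : ∃ i, (hherm x).eigenvalues i = lam := by
        have h := hlam
        rw [hS, (hherm x).spectrum_real_eq_range_eigenvalues] at h
        exact h
      set c : Fin n → ℝ := ⇑((hherm x).eigenvectorBasis i) with hc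
      have hcont : Continuous fun y =>
          ‖(WithLp.equiv 2 (Fin n → ℝ)).symm ((A y - A x) *ᵥ c)‖ := by
        apply Continuous.norm
        apply (PiLp.continuous_toLp 2 (fun _ : Fin n => ℝ)).comp
        apply continuous_pi
        intro k
        simp only [Matrix.mulVec, dotProduct, Matrix.sub_apply]
        apply continuous_finset_sum
        intro j _
        exact (((continuous_apply j).comp ((continuous_apply k).comp hA)).sub
          continuous_const).mul continuous_const
      have h0 : (fun y => ‖(WithLp.equiv 2 (Fin n → ℝ)).symm ((A y - A x) *ᵥ c)‖) x = 0 := by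
        simp [Matrix.mulVec]
      have htend : Filter.Tendsto
          (fun y => ‖(WithLp.equiv 2 (Fin n → ℝ)).symm ((A y - A x) *ᵥ c)‖)
          (nhds x) (nhds 0) := by
        rw [← h0]; exact hcont.continuousAt
      filter_upwards [htend.eventually_lt_const hε] with y hy
      obtain ⟨j, hj⟩ := my_exists_eigenvalue_close (hherm x) (hherm y) i
      exact ⟨(hherm y).eigenvalues j, (hherm y).eigenvalues_mem_spectrum_real j,
        by rw [← hi]; exact lt_of_le_of_lt hj hy⟩
    filter_upwards [hclose] with y hy
    -- build injection
    have hTfin : (spectrum ℝ (A y)).Finite := (A y).finite_real_spectrum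
    set g : ℝ → ℝ := fun l =>
      if h : ∃ μ ∈ spectrum ℝ (A y), |l - μ| < ε then h.choose else 0 with hg
    have hgspec : ∀ l ∈ S, g l ∈ spectrum ℝ (A y) ∧ |l - g l| < ε := by
      intro l hl
      have h := hy l hl
      rw [hg]
      simp only [dif_pos h]
      exact ⟨h.choose_spec.1, h.choose_spec.2⟩
    apply Set.ncard_le_ncard_of_injOn g (fun a ha => (hgspec a ha).1) ?_ hTfin
    intro a ha b hb hab
    by_contra hne
    have h2ε := hsep a ha b hb hne
    have h1 := (hgspec a ha).2
    have h2 := (hgspec b hb).2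
    have htri : |a - b| ≤ |a - g a| + |g a - b| := abs_sub_le a (g a) b
    have h2' : |g a - b| < ε := by rw [hab, abs_sub_comm]; exact h2
    linarith
  constructor
  · rw [isOpen_iff_mem_nhds]
    intro x hx
    have h2 := hx.eventually_nhds
    filter_upwards [hx, h2] with y h1 h3
    simp only [Set.mem_setOf_eq] at *
    filter_upwards [h3] with z hz
    exact hz.trans h1.symm
  · rw [dense_iff_inter_open]
    rintro U hU ⟨z, hz⟩
    have hbdd : ∀ y, f y ≤ n := by
      intro y
      rw [hf]
      simp only
      rw [(hherm y).spectrum_real_eq_range_eigenvalues, ← Set.image_univ]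
      calc ((hherm y).eigenvalues '' Set.univ).ncard ≤ (Set.univ : Set (Fin n)).ncard :=
            Set.ncard_image_le Set.finite_univ
        _ = n := by rw [Set.ncard_univ]; simp
    set T := f '' U with hT
    have hTne : T.Nonempty := ⟨f z, z, hz, rfl⟩
    have hTbdd : BddAbove T := ⟨n, by rintro t ⟨y, -, rfl⟩; exact hbdd y⟩
    obtain ⟨x, hxU, hfx⟩ := Nat.sSup_mem hTne hTbdd
    refine ⟨x, hxU, ?_⟩
    simp only [Set.mem_setOf_eq]
    filter_upwards [hlsc x, hU.mem_nhds hxU] with y h1 h2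
    exact le_antisymm (le_trans (le_csSup hTbdd ⟨y, h2, rfl⟩) hfx.ge) h1
end

section
/- Let X be a topological space and A : X → Matrix (Fin n) (Fin n) ℝ a continuous map. Then the set of points x ∈ X at which the function x ↦ rank(A(x)) is locally constant is open and dense in X. -/
open Matrix

/-- A square matrix of full rank has nonzero determinant. -/
lemma det_ne_zero_of_rank_eq_card {r : ℕ} (G : Matrix (Fin r) (Fin r) ℝ)
    (h : G.rank = r) : G.det ≠ 0 := by
  rw [Ne, ← Matrix.exists_mulVec_eq_zero_iff]
  rintro ⟨v, hv, hGv⟩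
  have hsurj : Function.Surjective G.mulVecLin := by
    rw [← LinearMap.range_eq_top]
    apply Submodule.eq_top_of_finrank_eq
    rw [show Module.finrank ℝ (LinearMap.range G.mulVecLin) = G.rank from rfl, h,
      Module.finrank_fin_fun]
  have hinj := (LinearMap.injective_iff_surjective (f := G.mulVecLin)).mpr hsurj
  apply hv
  have : G.mulVecLin v = G.mulVecLin 0 := by simpa [Matrix.mulVecLin_apply] using hGv
  simpa using hinj this

/-- Lower semicontinuity of the rank of a continuous family of matrices. -/
lemma rank_lsc {X : Type*} [TopologicalSpace X] {n : ℕ}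
    (A : X → Matrix (Fin n) (Fin n) ℝ) (hA : Continuous A) (x : X) :
    ∀ᶠ y in nhds x, (A x).rank ≤ (A y).rank := by
  classical
  set r := Module.finrank ℝ (LinearMap.range (A x).mulVecLin) with hr
  have hrank : (A x).rank = r := rfl
  let b := Module.finBasis ℝ (LinearMap.range (A x).mulVecLin)
  have hmem : ∀ i : Fin r, ∃ v, (A x).mulVecLin v = (b i : Fin n → ℝ) :=
    fun i => LinearMap.mem_range.mp (b i).2
  choose u hu using hmem
  let U : Matrix (Fin n) (Fin r) ℝ := fun j i => u i j
  have key : ∀ M : Matrix (Fin n) (Fin n) ℝ, (M * U)ᵀ = fun i => M.mulVec (u i) := by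
    intro M
    funext i j
    simp [U, Matrix.mul_apply, Matrix.mulVec, dotProduct]
    exact Matrix.mul_apply
  have hAxU : (A x * U)ᵀ = fun i => (b i : Fin n → ℝ) := by
    rw [key]
    funext i
    rw [← hu i, Matrix.mulVecLin_apply]
  have hindep : LinearIndependent ℝ ((A x * U)ᵀ) := by
    rw [hAxU]
    exact b.linearIndependent.map' (Submodule.subtype _) (Submodule.ker_subtype _)
  have hrAxU : (A x * U).rank = r := by
    rw [← Matrix.rank_transpose, LinearIndependent.rank_matrix (M := (A x * U)ᵀ) hindep, Fintype.card_fin]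
  have hdet : ((A x * U)ᵀ * (A x * U)).det ≠ 0 := by
    apply det_ne_zero_of_rank_eq_card
    rw [Matrix.rank_transpose_mul_self, hrAxU]
  have hF : Continuous fun y => ((A y * U)ᵀ * (A y * U)).det :=
    (((hA.matrix_mul continuous_const).matrix_transpose).matrix_mul
      (hA.matrix_mul continuous_const)).matrix_det
  filter_upwards [(hF.continuousAt (x := x)).eventually_ne hdet] with y hy
  have h1 : ((A y * U)ᵀ * (A y * U)).rank = r := by
    rw [Matrix.rank_of_isUnit _ ((Matrix.isUnit_iff_isUnit_det _).mpr
      (isUnit_iff_ne_zero.mpr hy)), Fintype.card_fin]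
  calc (A x).rank = r := hrank
    _ = (A y * U).rank := by rw [← Matrix.rank_transpose_mul_self (A y * U)]; exact h1.symm
    _ ≤ (A y).rank := Matrix.rank_mul_le_left _ _

theorem rank_locallyConstant_open_dense {X : Type*} [TopologicalSpace X] {n : ℕ}
    (A : X → Matrix (Fin n) (Fin n) ℝ) (hA : Continuous A) :
    IsOpen {x : X | ∀ᶠ y in nhds x, (A y).rank = (A x).rank} ∧
    Dense {x : X | ∀ᶠ y in nhds x, (A y).rank = (A x).rank} := by
  constructor
  · -- openness: true for any function
    rw [isOpen_iff_mem_nhds]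
    intro x hx
    have hx' : {y | (A y).rank = (A x).rank} ∈ nhds x := hx
    filter_upwards [eventually_eventually_nhds.mpr hx', hx'] with y hy hyx
    filter_upwards [hy] with z hz
    rw [hz, hyx]
  · rw [dense_iff_inter_open]
    rintro U hU ⟨x₀, hx₀⟩
    -- choose a point of U maximizing the rank
    have hbdd : BddAbove ((fun y => (A y).rank) '' U) := by
      refine ⟨n, ?_⟩
      rintro m ⟨y, -, rfl⟩
      exact (A y).rank_le_width
    have hne : ((fun y => (A y).rank) '' U).Nonempty := ⟨_, x₀, hx₀, rfl⟩
    obtain ⟨y, hyU, hy⟩ := Nat.sSup_mem hne hbdd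
    refine ⟨y, hyU, ?_⟩
    show ∀ᶠ z in nhds y, (A z).rank = (A y).rank
    filter_upwards [rank_lsc A hA y, hU.mem_nhds hyU] with z h1 h2
    exact le_antisymm ((le_csSup hbdd ⟨z, h2, rfl⟩).trans hy.ge) h1
end

section
/- Let U ⊆ ℝ^m be open, k ∈ ℕ ∪ {∞}, and A : U → Matrix (Fin n) (Fin n) ℝ a C^k map such that A(x) is symmetric for every x ∈ U and the rank of A(x) is constant on U. Then there exists a C^k map B : U → Matrix (Fin n) (Fin n) ℝ such that for every x ∈ U the matrix B(x) satisfies the Moore–Penrose identities with A(x): A(x) B(x) A(x) = A(x), B(x) A(x) B(x) = B(x), and A(x) B(x) and B(x) A(x) are symmetric. -/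
/-!
For a real symmetric matrix `M` of rank `r` with nonzero eigenvalues `λ₁, …, λᵣ`, the
characteristic polynomial is `X ^ (n - r) * g` with `g = ∏ (X - λᵢ)`, so `g 0 ≠ 0` and `X * g`
vanishes on the spectrum; since `M` is diagonalisable, `M g(M) = 0`. Writing `g = g 0 + X q`, the
matrix `Q = -q(M) / g 0` is a polynomial in `M` with `M Q M = M`, and `Q M Q` is the
Moore–Penrose inverse. Along a family of constant rank `r`, the coefficients of `g` are
coefficients of the characteristic polynomial, hence polynomials in the entries, so this
formula is as smooth as the family.
-/

open Polynomial

theorem Polynomial.coeff_divX_iterate {R : Type*} [Semiring R] (p : R[X]) (j i : ℕ) :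
    (divX^[j] p).coeff i = p.coeff (i + j) := by
  induction j generalizing i with
  | zero => rfl
  | succ j ih => rw [Function.iterate_succ_apply', coeff_divX, ih, add_right_comm, add_assoc]

theorem Polynomial.natDegree_divX_iterate_le {R : Type*} [Semiring R] (p : R[X]) (j : ℕ) :
    (divX^[j] p).natDegree ≤ p.natDegree := by
  induction j with
  | zero => rfl
  | succ j ih => exact (Function.iterate_succ_apply' divX j p ▸ natDegree_divX_le).trans ih

theorem Polynomial.divX_iterate_X_pow_mul {R : Type*} [Semiring R] (p : R[X]) (j : ℕ) :
    divX^[j] (X ^ j * p) = p := by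
  ext i
  rw [coeff_divX_iterate, coeff_X_pow_mul]

theorem Polynomial.commute_aeval {R A : Type*} [CommSemiring R] [Semiring A] [Algebra R A]
    (a : A) (p : R[X]) : Commute a (aeval a p) := by
  simpa using (commute_X p).map (aeval a)

theorem mul_smul_aeval_divX_mul_eq_self {K A : Type*} [Field K] [Ring A] [Algebra K A] {a : A}
    {g : K[X]} (hg0 : g.coeff 0 ≠ 0) (hg : aeval a (X * g) = 0) :
    a * (-(g.coeff 0)⁻¹ • aeval a g.divX) * a = a := by
  have ha : a * a * aeval a g.divX = -(g.coeff 0 • a) := by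
    rw [← X_mul_divX_add g] at hg
    simp only [map_mul, map_add, aeval_X, aeval_C, mul_add, Algebra.algebraMap_eq_smul_one,
      mul_smul_comm, mul_one, ← mul_assoc] at hg
    exact eq_neg_of_add_eq_zero_left hg
  rw [mul_smul_comm, smul_mul_assoc, mul_assoc, ← (commute_aeval a _).eq, ← mul_assoc, ha,
    neg_smul, smul_neg, neg_neg, smul_smul, inv_mul_cancel₀ hg0, one_smul]

namespace Matrix

variable {n : Type*} [Fintype n]

def IsMoorePenroseInverse {R : Type*} [CommSemiring R] (A B : Matrix n n R) : Prop :=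
  A * B * A = A ∧ B * A * B = B ∧ (A * B).IsSymm ∧ (B * A).IsSymm

theorem isMoorePenroseInverse_mul_mul {R : Type*} [CommSemiring R] {M Q : Matrix n n R}
    (hM : M.IsSymm) (hQ : Q.IsSymm) (hMQ : Commute M Q) (hMQM : M * Q * M = M) :
    IsMoorePenroseInverse M (Q * M * Q) := by
  have hQMQM : Q * M * Q * M = Q * M := by
    simp only [mul_assoc]; rw [← mul_assoc M Q M, hMQM]
  have hMQMQ : M * (Q * M * Q) = M * Q := by rw [← mul_assoc, ← mul_assoc, hMQM]
  have hsymm : (M * Q).IsSymm := by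
    rw [IsSymm, transpose_mul, hQ.eq, hM.eq, hMQ.eq]
  refine ⟨by rw [hMQMQ, hMQM], by rw [hQMQM, mul_assoc, hMQMQ, ← mul_assoc], ?_, ?_⟩
  · rwa [hMQMQ]
  · rwa [hQMQM, ← hMQ.eq]

variable [DecidableEq n]

theorem IsSymm.aeval {R : Type*} [CommSemiring R] {A : Matrix n n R} (hA : A.IsSymm) (p : R[X]) :
    (aeval A p).IsSymm := by
  simp only [IsSymm, aeval_eq_sum_range, transpose_sum, transpose_smul, transpose_pow, hA.eq]

section Field

variable {K : Type*} [Field K]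

noncomputable def charpolyCore (r : ℕ) (M : Matrix n n K) : K[X] :=
  divX^[Fintype.card n - r] M.charpoly

noncomputable def innerInverseOfRank (r : ℕ) (M : Matrix n n K) : Matrix n n K :=
  -((charpolyCore r M).coeff 0)⁻¹ • aeval M (charpolyCore r M).divX

noncomputable def pinvOfRank (r : ℕ) (M : Matrix n n K) : Matrix n n K :=
  innerInverseOfRank r M * M * innerInverseOfRank r M

theorem isMoorePenroseInverse_pinvOfRank_of_aeval_eq_zero {M : Matrix n n K} {r : ℕ}
    (hM : M.IsSymm) (h0 : (charpolyCore r M).coeff 0 ≠ 0)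
    (hMg : aeval M (X * charpolyCore r M) = 0) :
    IsMoorePenroseInverse M (pinvOfRank r M) :=
  isMoorePenroseInverse_mul_mul hM ((hM.aeval _).smul _) ((commute_aeval M _).smul_right _)
    (mul_smul_aeval_divX_mul_eq_self h0 hMg)

end Field

namespace IsHermitian

variable {𝕜 : Type*} [RCLike 𝕜] {A : Matrix n n 𝕜}

theorem aeval_eq_zero_of_eval_eigenvalues (hA : A.IsHermitian) {q : ℝ[X]}
    (hq : ∀ i, q.eval (hA.eigenvalues i) = 0) : aeval A q = 0 := by
  rw [← cfc_polynomial q A hA.isSelfAdjoint, ← cfc_zero ℝ A]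
  refine cfc_congr ?_
  rw [hA.spectrum_real_eq_range_eigenvalues]
  rintro _ ⟨i, rfl⟩
  exact hq i

theorem charpoly_eq_X_pow_mul (hA : A.IsHermitian) :
    A.charpoly = X ^ (Fintype.card n - A.rank) *
      ∏ i with hA.eigenvalues i ≠ 0, (X - C (hA.eigenvalues i : 𝕜)) := by
  rw [hA.charpoly_eq, ← Finset.prod_filter_not_mul_prod_filter _ (fun i => hA.eigenvalues i ≠ 0)]
  congr 1
  have hker : (Finset.univ.filter fun i => ¬hA.eigenvalues i ≠ 0).card =
      Fintype.card n - A.rank := by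
    rw [hA.rank_eq_card_non_zero_eigs, Finset.filter_not, Finset.card_sdiff, Fintype.card_subtype]
    simp
  rw [← hker, ← Finset.prod_const]
  refine Finset.prod_congr rfl fun i hi => ?_
  simp_all

theorem charpolyCore_rank (hA : A.IsHermitian) :
    charpolyCore A.rank A = ∏ i with hA.eigenvalues i ≠ 0, (X - C (hA.eigenvalues i : 𝕜)) := by
  rw [charpolyCore, hA.charpoly_eq_X_pow_mul, divX_iterate_X_pow_mul]

theorem coeff_zero_charpolyCore_rank_ne_zero (hA : A.IsHermitian) :
    (charpolyCore A.rank A).coeff 0 ≠ 0 := by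
  rw [hA.charpolyCore_rank, coeff_zero_eq_eval_zero, eval_prod, Finset.prod_ne_zero_iff]
  intro i hi
  simpa using hi

end IsHermitian

theorem IsSymm.aeval_X_mul_charpolyCore_rank {M : Matrix n n ℝ} (hM : M.IsSymm) :
    Polynomial.aeval M (X * charpolyCore M.rank M) = 0 := by
  have hH : M.IsHermitian := isHermitian_iff_isSymm.mpr hM
  refine hH.aeval_eq_zero_of_eval_eigenvalues fun i => ?_
  rw [hH.charpolyCore_rank, eval_mul, eval_X, eval_prod]
  by_cases hi : hH.eigenvalues i = 0
  · rw [hi, zero_mul]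
  · exact mul_eq_zero_of_right _ (Finset.prod_eq_zero (by simpa using hi) (by simp))

theorem IsSymm.isMoorePenroseInverse_pinvOfRank {M : Matrix n n ℝ} (hM : M.IsSymm) :
    IsMoorePenroseInverse M (pinvOfRank M.rank M) :=
  isMoorePenroseInverse_pinvOfRank_of_aeval_eq_zero hM
    (isHermitian_iff_isSymm.mpr hM).coeff_zero_charpolyCore_rank_ne_zero
    hM.aeval_X_mul_charpolyCore_rank

end Matrix

section Smoothness

variable {𝕜 E : Type*} [NontriviallyNormedField 𝕜] [NormedAddCommGroup E] [NormedSpace 𝕜 E]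
  {U : Set E} {k : WithTop ℕ∞}

theorem contDiffOn_mvPolynomial_eval {σ : Type*} {f : σ → E → 𝕜}
    (hf : ∀ i, ContDiffOn 𝕜 k (f i) U) (q : MvPolynomial σ 𝕜) :
    ContDiffOn 𝕜 k (fun x => MvPolynomial.eval (fun i => f i x) q) U := by
  induction q using MvPolynomial.induction_on with
  | C a => simpa using contDiffOn_const
  | add p q hp hq => simpa using hp.add hq
  | mul_X p i hp => simpa using hp.mul (hf i)

variable {l m n : Type*} [Fintype m]

theorem contDiffOn_matrix_mul_apply {A : E → Matrix l m 𝕜} {B : E → Matrix m n 𝕜}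
    (hA : ∀ i j, ContDiffOn 𝕜 k (fun x => A x i j) U)
    (hB : ∀ i j, ContDiffOn 𝕜 k (fun x => B x i j) U) (i : l) (j : n) :
    ContDiffOn 𝕜 k (fun x => (A x * B x) i j) U := by
  simp only [Matrix.mul_apply]
  exact ContDiffOn.sum fun t _ => (hA i t).mul (hB t j)

variable [Fintype n] [DecidableEq n] {A : E → Matrix n n 𝕜}
  (hA : ∀ i j, ContDiffOn 𝕜 k (fun x => A x i j) U)
include hA

theorem contDiffOn_matrix_pow_apply (e : ℕ) (i j : n) :
    ContDiffOn 𝕜 k (fun x => (A x ^ e) i j) U := by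
  induction e generalizing i j with
  | zero => simpa [Matrix.one_apply] using contDiffOn_const
  | succ e ih => simpa only [pow_succ] using contDiffOn_matrix_mul_apply ih hA i j

theorem contDiffOn_matrix_aeval_apply {P : E → 𝕜[X]}
    (hP : ∀ t, ContDiffOn 𝕜 k (fun x => (P x).coeff t) U) {N : ℕ} (hN : ∀ x, (P x).natDegree < N)
    (i j : n) : ContDiffOn 𝕜 k (fun x => aeval (A x) (P x) i j) U := by
  simp only [aeval_eq_sum_range' (hN _), Matrix.sum_apply, Matrix.smul_apply, smul_eq_mul]
  exact ContDiffOn.sum fun t _ => (hP t).mul (contDiffOn_matrix_pow_apply hA t i j)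

theorem contDiffOn_charpoly_coeff (t : ℕ) :
    ContDiffOn 𝕜 k (fun x => (A x).charpoly.coeff t) U := by
  refine (contDiffOn_mvPolynomial_eval (fun p : n × n => hA p.1 p.2)
    ((Matrix.mvPolynomialX n n 𝕜).charpoly.coeff t)).congr fun x _ => ?_
  rw [← coeff_map, ← Matrix.charpoly_map]
  exact congrArg (fun M : Matrix n n 𝕜 => M.charpoly.coeff t)
    (Matrix.mvPolynomialX_mapMatrix_eval _).symm

theorem contDiffOn_pinvOfRank_apply (r : ℕ)
    (h0 : ∀ x ∈ U, (Matrix.charpolyCore r (A x)).coeff 0 ≠ 0) (i j : n) :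
    ContDiffOn 𝕜 k (fun x => Matrix.pinvOfRank r (A x) i j) U := by
  have hcoeff (e t : ℕ) : ContDiffOn 𝕜 k (fun x => (divX^[e] (A x).charpoly).coeff t) U := by
    simpa only [coeff_divX_iterate] using contDiffOn_charpoly_coeff hA (t + e)
  have hdivX (x : E) : (Matrix.charpolyCore r (A x)).divX =
      divX^[Fintype.card n - r + 1] (A x).charpoly :=
    (Function.iterate_succ_apply' _ _ _).symm
  have hQ (i j : n) : ContDiffOn 𝕜 k (fun x => Matrix.innerInverseOfRank r (A x) i j) U := by
    simp only [Matrix.innerInverseOfRank, Matrix.smul_apply, smul_eq_mul, hdivX]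
    refine ((hcoeff _ 0).inv h0).neg.mul (contDiffOn_matrix_aeval_apply hA (hcoeff _)
      (N := Fintype.card n + 1) (fun x => ?_) i j)
    exact Nat.lt_succ_of_le
      ((natDegree_divX_iterate_le _ _).trans (A x).charpoly_natDegree_eq_dim.le)
  exact contDiffOn_matrix_mul_apply (contDiffOn_matrix_mul_apply hQ hA) hQ i j

end Smoothness

theorem contDiffOn_moorePenrose_general {m n : ℕ} (U : Set (Fin m → ℝ))
    (k : ℕ∞) (A : (Fin m → ℝ) → Matrix (Fin n) (Fin n) ℝ)
    (hA : ∀ i j, ContDiffOn ℝ k (fun x => A x i j) U)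
    (hsymm : ∀ x ∈ U, (A x).IsSymm)
    (r : ℕ) (hrank : ∀ x ∈ U, (A x).rank = r) :
    ∃ B : (Fin m → ℝ) → Matrix (Fin n) (Fin n) ℝ,
      (∀ i j, ContDiffOn ℝ k (fun x => B x i j) U) ∧
      ∀ x ∈ U, A x * B x * A x = A x ∧ B x * A x * B x = B x ∧
        (A x * B x).IsSymm ∧ (B x * A x).IsSymm := by
  refine ⟨fun x => Matrix.pinvOfRank r (A x), contDiffOn_pinvOfRank_apply hA r ?_, ?_⟩
  · intro x hx
    rw [← hrank x hx]
    exact (Matrix.isHermitian_iff_isSymm.mpr (hsymm x hx)).coeff_zero_charpolyCore_rank_ne_zero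
  · intro x hx
    rw [← hrank x hx]
    exact (hsymm x hx).isMoorePenroseInverse_pinvOfRank

/-- Smoothness of the Moore–Penrose inverse of a symmetric matrix family of constant rank. -/
theorem contDiffOn_moorePenrose {m n : ℕ} (U : Set (Fin m → ℝ)) (hU : IsOpen U)
    (k : ℕ∞) (A : (Fin m → ℝ) → Matrix (Fin n) (Fin n) ℝ)
    (hA : ∀ i j, ContDiffOn ℝ k (fun x => A x i j) U)
    (hsymm : ∀ x ∈ U, (A x).IsSymm)
    (r : ℕ) (hrank : ∀ x ∈ U, (A x).rank = r) :
    ∃ B : (Fin m → ℝ) → Matrix (Fin n) (Fin n) ℝ,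
      (∀ i j, ContDiffOn ℝ k (fun x => B x i j) U) ∧
      ∀ x ∈ U, A x * B x * A x = A x ∧ B x * A x * B x = B x ∧
        (A x * B x).IsSymm ∧ (B x * A x).IsSymm :=
  contDiffOn_moorePenrose_general U k A hA hsymm r hrank
end

section
/- Let U ⊆ ℝ^m be open, k ∈ ℕ ∪ {∞}, and A : U → Matrix (Fin n) (Fin n) ℝ a C^k map such that A(x) is symmetric for every x ∈ U and the rank of A(x) equals a constant r on U. Then every point of U has an open neighborhood U' ⊆ U on which there exist C^k maps u₁, …, u_{n−r} : U' → ℝⁿ such that for every x ∈ U' the vectors u₁(x), …, u_{n−r}(x) form a basis of the kernel of A(x). -/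
open Matrix Set

/-- If all entries of a matrix-valued function are `C^k`, so is its determinant. -/
private lemma contDiffOn_det_aux {m n : ℕ} {k : ℕ∞} {s : Set (Fin m → ℝ)}
    {M : (Fin m → ℝ) → Matrix (Fin n) (Fin n) ℝ}
    (h : ∀ i j, ContDiffOn ℝ k (fun x => M x i j) s) :
    ContDiffOn ℝ k (fun x => (M x).det) s := by
  have : (fun x => (M x).det)
      = fun x => ∑ σ : Equiv.Perm (Fin n),
          ((Equiv.Perm.sign σ : ℤ) : ℝ) * ∏ i, M x (σ i) i := by
    funext x
    rw [Matrix.det_apply]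
    refine Finset.sum_congr rfl fun σ _ => ?_
    simp [Units.smul_def, zsmul_eq_mul]
  rw [this]
  refine ContDiffOn.sum fun σ _ => ContDiffOn.mul contDiffOn_const ?_
  exact contDiffOn_prod fun i _ => h (σ i) i

/-- Local existence of a `C^k` basis of the kernel of a symmetric matrix family of
constant rank. -/
theorem contDiffOn_kernel_basis {m n : ℕ} (U : Set (Fin m → ℝ)) (hU : IsOpen U)
    (k : ℕ∞) (A : (Fin m → ℝ) → Matrix (Fin n) (Fin n) ℝ)
    (hA : ∀ i j, ContDiffOn ℝ k (fun x => A x i j) U)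
    (hsymm : ∀ x ∈ U, (A x).IsSymm)
    (r : ℕ) (hrank : ∀ x ∈ U, (A x).rank = r) :
    ∀ x₀ ∈ U, ∃ U' : Set (Fin m → ℝ), IsOpen U' ∧ x₀ ∈ U' ∧ U' ⊆ U ∧
      ∃ u : Fin (n - r) → (Fin m → ℝ) → (Fin n → ℝ),
        (∀ i j, ContDiffOn ℝ k (fun x => u i x j) U') ∧
        ∀ x ∈ U', LinearIndependent ℝ (fun i => u i x) ∧
          Submodule.span ℝ (Set.range fun i => u i x) = LinearMap.ker (A x).mulVecLin := by
  classical
  intro x₀ hx₀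
  set K₀ : Submodule ℝ (Fin n → ℝ) := LinearMap.ker (A x₀).mulVecLin with hK₀def
  -- dimension of kernels
  have hker_dim : ∀ x ∈ U, Module.finrank ℝ (LinearMap.ker (A x).mulVecLin) = n - r := by
    intro x hx
    have h1 := LinearMap.finrank_range_add_finrank_ker (A x).mulVecLin
    have h2 : Module.finrank ℝ (Fin n → ℝ) = n := Module.finrank_fin_fun ℝ
    have h3 : Module.finrank ℝ (LinearMap.range (A x).mulVecLin) = r := hrank x hx
    omega
  have hK₀fin : Module.finrank ℝ K₀ = n - r := hker_dim x₀ hx₀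
  -- projection onto K₀
  obtain ⟨C, hC⟩ := Submodule.exists_isCompl K₀
  set Q : (Fin n → ℝ) →ₗ[ℝ] (Fin n → ℝ) :=
    K₀.subtype ∘ₗ (K₀.linearProjOfIsCompl C hC) with hQdef
  have hQmem : ∀ w, Q w ∈ K₀ := fun w => (K₀.linearProjOfIsCompl C hC w).2
  have hQid : ∀ w ∈ K₀, Q w = w := by
    intro w hw
    have := Submodule.linearProjOfIsCompl_apply_left hC ⟨w, hw⟩
    simp only [hQdef, LinearMap.comp_apply, this, Submodule.coe_subtype]
    exact congrArg Subtype.val this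
  set Qm : Matrix (Fin n) (Fin n) ℝ := LinearMap.toMatrix' Q with hQmdef
  have hQm : ∀ w, Qm *ᵥ w = Q w := by
    intro w
    have : Matrix.toLin' Qm w = Q w := by rw [hQmdef, Matrix.toLin'_toMatrix']
    rwa [Matrix.toLin'_apply] at this
  set M : (Fin m → ℝ) → Matrix (Fin n) (Fin n) ℝ := fun x => A x + Qm with hMdef
  have hMmulVec : ∀ x w, M x *ᵥ w = A x *ᵥ w + Q w := by
    intro x w; rw [hMdef]; simp [Matrix.add_mulVec, hQm]
  -- M x₀ is invertible
  have hM₀ : IsUnit (M x₀).det := by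
    refine (Matrix.isUnit_iff_isUnit_det _).mp (Matrix.mulVec_injective_iff_isUnit.mp ?_)
    intro a b hab
    have key : ∀ w, M x₀ *ᵥ w = 0 → w = 0 := by
      intro w hw
      rw [hMmulVec] at hw
      set y : Fin n → ℝ := A x₀ *ᵥ w with hydef
      have hyK : y ∈ K₀ := by
        have : y = -(Q w) := by rw [eq_neg_iff_add_eq_zero]; exact hw
        rw [this]; exact K₀.neg_mem (hQmem w)
      have hy0 : (A x₀) *ᵥ y = 0 := hyK
      have hyy : y ⬝ᵥ y = 0 := by
        calc y ⬝ᵥ y = (A x₀ *ᵥ w) ⬝ᵥ y := by rw [hydef]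
          _ = w ⬝ᵥ ((A x₀)ᵀ *ᵥ y) := by
              rw [dotProduct_comm, Matrix.dotProduct_mulVec,
                Matrix.mulVec_transpose]
              exact dotProduct_comm _ _
          _ = w ⬝ᵥ (A x₀ *ᵥ y) := by rw [(hsymm x₀ hx₀).eq]
          _ = 0 := by rw [hy0, dotProduct_zero]
      have hy : y = 0 := dotProduct_self_eq_zero.mp hyy
      have hwK : w ∈ K₀ := hy
      have hQw : Q w = 0 := by
        have : (0 : Fin n → ℝ) + Q w = 0 := by rw [← hy] at hw ⊢; rw [hydef] at hw; exact hw
        simpa using this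
      rw [← hQid w hwK, hQw]
    have : M x₀ *ᵥ (a - b) = 0 := by
      rw [Matrix.mulVec_sub, hab, sub_self]
    exact sub_eq_zero.mp (key _ this)
  -- the open neighborhood
  have hMentries : ∀ i j, ContDiffOn ℝ k (fun x => M x i j) U := by
    intro i j
    have : (fun x => M x i j) = fun x => A x i j + Qm i j := by
      funext x; rw [hMdef]; simp [Matrix.add_apply]
    rw [this]
    exact (hA i j).add contDiffOn_const
  have hdet : ContDiffOn ℝ k (fun x => (M x).det) U := contDiffOn_det_aux hMentries
  set U' : Set (Fin m → ℝ) := U ∩ {x | (M x).det ≠ 0} with hU'def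
  have hU'open : IsOpen U' := by
    have : U' = U ∩ (fun x => (M x).det) ⁻¹' ({0}ᶜ) := by
      rw [hU'def]; rfl
    rw [this]
    exact (hdet.continuousOn).isOpen_inter_preimage hU isOpen_compl_singleton
  have hx₀U' : x₀ ∈ U' := ⟨hx₀, hM₀.ne_zero⟩
  have hU'sub : U' ⊆ U := Set.inter_subset_left
  have hdetU' : ∀ x ∈ U', IsUnit (M x).det := fun x hx => isUnit_iff_ne_zero.mpr hx.2
  -- basis of K₀
  have b : Module.Basis (Fin (n - r)) ℝ K₀ := Module.finBasisOfFinrankEq ℝ K₀ hK₀fin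
  set v : Fin (n - r) → (Fin n → ℝ) := fun i => (b i : Fin n → ℝ) with hvdef
  have hspanv : Submodule.span ℝ (Set.range v) = K₀ := by
    have h1 : Set.range v = K₀.subtype '' (Set.range b) := by
      rw [hvdef, ← Set.range_comp]; rfl
    rw [h1, ← Submodule.map_span, b.span_eq, Submodule.map_top, Submodule.range_subtype]
  -- the candidate sections
  set u : Fin (n - r) → (Fin m → ℝ) → (Fin n → ℝ) := fun i x => (M x)⁻¹ *ᵥ v i with hudef
  refine ⟨U', hU'open, hx₀U', hU'sub, u, ?_, ?_⟩
  · -- smoothness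
    intro i j
    have hadj : ∀ a c : Fin n, ContDiffOn ℝ k (fun x => (M x).adjugate a c) U := by
      intro a c
      have : (fun x => (M x).adjugate a c)
          = fun x => ((M x).updateRow c (Pi.single a 1)).det := by
        funext x; rw [Matrix.adjugate_apply]
      rw [this]
      refine contDiffOn_det_aux fun p q => ?_
      rcases eq_or_ne p c with hp | hp
      · have hc : ContDiffOn ℝ k (fun _ : Fin m → ℝ => (Pi.single a (1:ℝ) : Fin n → ℝ) q) U :=
          contDiffOn_const
        refine ContDiffOn.congr hc fun x _ => ?_
        rw [hp, Matrix.updateRow_self]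
      · refine ContDiffOn.congr (hMentries p q) fun x _ => ?_
        rw [Matrix.updateRow_ne hp]
    have heq : ∀ x ∈ U', u i x j
        = ((M x).det)⁻¹ * ∑ l, (M x).adjugate j l * v i l := by
      intro x hx
      rw [hudef]
      simp only [Matrix.inv_def, Ring.inverse_eq_inv', Matrix.smul_mulVec,
        Pi.smul_apply, smul_eq_mul]
      congr 1
    refine ContDiffOn.congr ?_ heq
    refine ContDiffOn.mul ((hdet.mono hU'sub).inv fun x hx => hx.2) ?_
    exact ContDiffOn.sum fun l _ =>
      ((hadj j l).mono hU'sub).mul contDiffOn_const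
  · -- linear independence and spanning
    intro x hx
    have hxU : x ∈ U := hU'sub hx
    have hdx : IsUnit (M x).det := hdetU' x hx
    have hMinvM : (M x)⁻¹ * M x = 1 := Matrix.nonsing_inv_mul _ hdx
    have hMMinv : M x * (M x)⁻¹ = 1 := Matrix.mul_nonsing_inv _ hdx
    have hinj : Function.Injective (M x)⁻¹.mulVecLin := by
      intro a c hac
      have : M x *ᵥ ((M x)⁻¹ *ᵥ a) = M x *ᵥ ((M x)⁻¹ *ᵥ c) := by
        simp only [Matrix.mulVecLin_apply] at hac
        rw [hac]
      rwa [Matrix.mulVec_mulVec, Matrix.mulVec_mulVec, hMMinv, Matrix.one_mulVec,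
        Matrix.one_mulVec] at this
    have hMinj : Function.Injective (M x).mulVecLin := by
      intro a c hac
      have : (M x)⁻¹ *ᵥ (M x *ᵥ a) = (M x)⁻¹ *ᵥ (M x *ᵥ c) := by
        simp only [Matrix.mulVecLin_apply] at hac
        rw [hac]
      rwa [Matrix.mulVec_mulVec, Matrix.mulVec_mulVec, hMinvM, Matrix.one_mulVec,
        Matrix.one_mulVec] at this
    constructor
    · -- linear independence
      have h1 : LinearIndependent ℝ v := by
        rw [hvdef]
        exact b.linearIndependent.map' K₀.subtype (Submodule.ker_subtype K₀)
      have h2 := h1.map' (M x)⁻¹.mulVecLin (LinearMap.ker_eq_bot.mpr hinj)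
      exact h2
    · -- spanning
      set N : Submodule ℝ (Fin n → ℝ) := LinearMap.ker (A x).mulVecLin with hNdef
      have hNfin : Module.finrank ℝ N = n - r := hker_dim x hxU
      have hmaple : Submodule.map (M x).mulVecLin N ≤ K₀ := by
        rintro y ⟨w, hw, rfl⟩
        have hw0 : A x *ᵥ w = 0 := hw
        rw [Matrix.mulVecLin_apply, hMmulVec, hw0, zero_add]
        exact hQmem w
      have hfr : Module.finrank ℝ (Submodule.map (M x).mulVecLin N) = n - r := by
        rw [← hNfin]
        exact (Submodule.equivMapOfInjective _ hMinj N).finrank_eq.symm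
      have hmapeq : Submodule.map (M x).mulVecLin N = K₀ :=
        Submodule.eq_of_le_of_finrank_eq hmaple (by rw [hfr, hK₀fin])
      have hNeq : N = Submodule.map (M x)⁻¹.mulVecLin K₀ := by
        rw [← hmapeq, ← Submodule.map_comp, ← Matrix.mulVecLin_mul, hMinvM,
          Matrix.mulVecLin_one, Submodule.map_id]
      have hrangeu : (Set.range fun i => u i x) = (M x)⁻¹.mulVecLin '' (Set.range v) := by
        rw [← Set.range_comp]
        rfl
      rw [hrangeu, ← Submodule.map_span, hspanv, ← hNeq, hNdef]
end
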